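/- Under the Benjamini–Hochberg procedure applied to m independent p-values, each uniform on [0,1] under the null, with m₀ true nulls, the FDR is exactly α·m₀/m (for the continuous uniform case); in particular FDR ≤ α. -/

import Mathlib

/-! Leave-one-out argument. Let `Kⱼ` be the BH index computed after replacing `pⱼ` by `0`. Then
`j` is rejected iff `pⱼ ≤ Kⱼ α / m`, and in that case exactly `Kⱼ` hypotheses are rejected, so the
false discovery proportion equals `∑_{j ∈ H₀} 1{pⱼ ≤ Kⱼ α / m} / Kⱼ`. As `Kⱼ` is a function of the
other p-values it is independent of `pⱼ`, and for a uniform null `pⱼ` conditioning on `Kⱼ = k`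
gives `P(pⱼ ≤ k α / m) / k = α / m`; summing over the `m₀` nulls gives `α m₀ / m`. -/

/-- The i-th smallest of the values `p 1, ..., p m` (1-indexed). -/
noncomputable def sortedVal {m : ℕ} (p : Fin m → ℝ) (i : ℕ) : ℝ :=
  (Multiset.sort (Multiset.ofList (List.ofFn p)) (· ≤ ·)).getD (i - 1) 0

open Classical in
/-- The Benjamini–Hochberg cutoff index `k(α) = max{i : p_(i) ≤ iα/m}`. -/
noncomputable def bhIndex {m : ℕ} (p : Fin m → ℝ) (α : ℝ) : ℕ :=
  ((Finset.Icc 1 m).filter (fun i => sortedVal p i ≤ i * α / m)).sup id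

open Classical in
/-- The BH rejection set at level α, `{j : p_j ≤ k(α)·α/m}`. -/
noncomputable def bhReject {m : ℕ} (p : Fin m → ℝ) (α : ℝ) : Finset (Fin m) :=
  Finset.univ.filter (fun j => p j ≤ (bhIndex p α : ℝ) * α / m)

open Finset Function

theorem List.Pairwise.getElem_le_iff_lt_countP {α : Type*} [LinearOrder α] {L : List α}
    (hL : L.Pairwise (· ≤ ·)) {i : ℕ} (hi : i < L.length) (t : α) :
    L[i] ≤ t ↔ i < L.countP (· ≤ t) := by
  induction L generalizing i with
  | nil => simp at hi
  | cons a L ih =>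
    rw [List.pairwise_cons] at hL
    by_cases ha : a ≤ t
    · cases i with
      | zero => simp [ha]
      | succ i => simp [ha, ih hL.2 (Nat.lt_of_succ_lt_succ hi)]
    · have hgt : ∀ b ∈ a :: L, ¬b ≤ t := by
        simp only [List.mem_cons, forall_eq_or_imp]
        exact ⟨ha, fun b hb hbt => ha ((hL.1 b hb).trans hbt)⟩
      have hzero : (a :: L).countP (· ≤ t) = 0 := List.countP_eq_zero.2 (by simpa using hgt)
      simpa [hzero] using hgt _ (List.getElem_mem hi)

noncomputable def countLE {m : ℕ} (p : Fin m → ℝ) (t : ℝ) : ℕ := #{j | p j ≤ t}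

section

variable {m : ℕ}

theorem countLE_le (p : Fin m → ℝ) (t : ℝ) : countLE p t ≤ m :=
  (card_filter_le _ _).trans_eq (card_fin m)

theorem countLE_le_countLE {p q : Fin m → ℝ} {s t : ℝ} (h : ∀ j, p j ≤ s → q j ≤ t) :
    countLE p s ≤ countLE q t :=
  card_le_card fun j => by simpa using h j

theorem sortedVal_le_iff (p : Fin m → ℝ) {i : ℕ} (h1 : 1 ≤ i) (h2 : i ≤ m) (t : ℝ) :
    sortedVal p i ≤ t ↔ i ≤ countLE p t := by
  set L := Multiset.sort (Multiset.ofList (List.ofFn p)) (· ≤ ·)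
  have hlen : L.length = m := by simp [L]
  have hcount : L.countP (· ≤ t) = countLE p t := by
    rw [← Multiset.coe_countP, Multiset.sort_eq, ← Fin.univ_val_map, Multiset.countP_map]
    simp [countLE, card_def, filter_val]
  have hi : i - 1 < L.length := by omega
  rw [sortedVal, List.getD_eq_getElem _ _ hi,
    (Multiset.pairwise_sort _ _).getElem_le_iff_lt_countP hi, hcount]
  omega

end

section

variable {m : ℕ} (p : Fin m → ℝ) (α : ℝ)

theorem bhIndex_eq_sup_countLE :
    bhIndex p α = ((Icc 1 m).filter fun i : ℕ => i ≤ countLE p (i * α / m)).sup id := by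
  rw [bhIndex]
  congr 1
  refine filter_congr fun i hi => ?_
  rw [mem_Icc] at hi
  exact sortedVal_le_iff p hi.1 hi.2 _

theorem bhIndex_le : bhIndex p α ≤ m := by
  rw [bhIndex_eq_sup_countLE]
  exact Finset.sup_le fun i hi => (mem_Icc.1 (mem_filter.1 hi).1).2

variable {p α}

theorem le_bhIndex {i : ℕ} (hm : i ≤ m) (hi : i ≤ countLE p (i * α / m)) : i ≤ bhIndex p α := by
  rcases Nat.eq_zero_or_pos i with rfl | hpos
  · exact Nat.zero_le _
  rw [bhIndex_eq_sup_countLE]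
  exact le_sup (f := id) (mem_filter.2 ⟨mem_Icc.2 ⟨hpos, hm⟩, hi⟩)

variable (p α)

theorem bhIndex_le_countLE : bhIndex p α ≤ countLE p (bhIndex p α * α / m) := by
  rw [bhIndex_eq_sup_countLE]
  set S := (Icc 1 m).filter fun i : ℕ => i ≤ countLE p (i * α / m)
  rcases S.eq_empty_or_nonempty with hS | hS
  · simp [hS]
  obtain ⟨k, hk, hsup⟩ := exists_mem_eq_sup S hS id
  rw [hsup]
  exact (mem_filter.1 hk).2

theorem countLE_bhIndex_le (hα : 0 ≤ α) : countLE p (bhIndex p α * α / m) ≤ bhIndex p α := by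
  set k := bhIndex p α
  by_contra! hk
  replace hk : k + 1 ≤ countLE p (k * α / m) := hk
  have hkm : k + 1 ≤ m := hk.trans (countLE_le p _)
  have hstep : k + 1 ≤ countLE p ((k + 1 : ℕ) * α / m) :=
    hk.trans (countLE_le_countLE fun j hj => hj.trans (by gcongr; simp))
  exact absurd (le_bhIndex hkm hstep) (by omega)

-- `#(bhReject p α)` unfolds to `countLE p (bhIndex p α * α / m)`.
theorem card_bhReject (hα : 0 ≤ α) : #(bhReject p α) = bhIndex p α :=
  (countLE_bhIndex_le p α hα).antisymm (bhIndex_le_countLE p α)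

variable {p α} {q : Fin m → ℝ}

theorem bhIndex_le_bhIndex_of_countLE_le
    (h : countLE p (bhIndex p α * α / m) ≤ countLE q (bhIndex p α * α / m)) :
    bhIndex p α ≤ bhIndex q α :=
  le_bhIndex (bhIndex_le p α) ((bhIndex_le_countLE p α).trans h)

end

section

variable {m : ℕ} {α : ℝ} (p : Fin m → ℝ) (j : Fin m)

theorem bhIndex_le_bhIndex_update (hα : 0 ≤ α) : bhIndex p α ≤ bhIndex (update p j 0) α := by
  refine bhIndex_le_bhIndex_of_countLE_le (countLE_le_countLE fun l hl => ?_)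
  rcases eq_or_ne l j with rfl | hne
  · rw [update_self]
    positivity
  · rwa [update_of_ne hne]

theorem one_le_bhIndex_update (hα : 0 ≤ α) : 1 ≤ bhIndex (update p j 0) α := by
  refine le_bhIndex (Fin.pos j) (card_pos.2 ⟨j, mem_filter.2 ⟨mem_univ j, ?_⟩⟩)
  rw [update_self]
  positivity

theorem bhIndex_update_le (h : p j ≤ bhIndex (update p j 0) α * α / m) :
    bhIndex (update p j 0) α ≤ bhIndex p α := by
  refine bhIndex_le_bhIndex_of_countLE_le (countLE_le_countLE fun l hl => ?_)
  rcases eq_or_ne l j with rfl | hne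
  · exact h
  · rwa [update_of_ne hne] at hl

theorem mem_bhReject_iff (hα : 0 ≤ α) :
    j ∈ bhReject p α ↔ p j ≤ bhIndex (update p j 0) α * α / m := by
  rw [bhReject, mem_filter, and_iff_right (mem_univ j)]
  refine ⟨fun hj => hj.trans ?_, fun hj => hj.trans ?_⟩
  · gcongr
    exact bhIndex_le_bhIndex_update p j hα
  · gcongr
    exact bhIndex_update_le p j hj

theorem bhIndex_update_eq_of_mem (hα : 0 ≤ α) (hj : j ∈ bhReject p α) :
    bhIndex (update p j 0) α = bhIndex p α :=
  (bhIndex_update_le p j ((mem_bhReject_iff p j hα).1 hj)).antisymm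
    (bhIndex_le_bhIndex_update p j hα)

end

theorem card_bhReject_inter_div_eq_sum {m : ℕ} (p : Fin m → ℝ) {α : ℝ} (hα : 0 ≤ α)
    (H : Finset (Fin m)) :
    (#(bhReject p α ∩ H) : ℝ) / max (#(bhReject p α) : ℝ) 1 =
      ∑ j ∈ H, if p j ≤ bhIndex (update p j 0) α * α / m
        then (bhIndex (update p j 0) α : ℝ)⁻¹ else 0 := by
  rw [inter_comm, ← filter_mem_eq_inter, card_filter, Nat.cast_sum, sum_div]
  refine sum_congr rfl fun j _ => ?_
  by_cases hj : j ∈ bhReject p α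
  · have hK := one_le_bhIndex_update p j hα
    rw [if_pos hj, if_pos ((mem_bhReject_iff p j hα).1 hj), card_bhReject p α hα,
      ← bhIndex_update_eq_of_mem p j hα hj, max_eq_left (by exact_mod_cast hK)]
    simp
  · rw [if_neg hj, if_neg (mt (mem_bhReject_iff p j hα).2 hj)]
    simp

open MeasureTheory ProbabilityTheory

theorem Finset.measurable_sup_apply {δ ι α : Type*} [MeasurableSpace δ] [MeasurableSpace α]
    [SemilatticeSup α] [OrderBot α] [MeasurableSup₂ α] (s : Finset ι) {f : ι → δ → α}
    (hf : ∀ i ∈ s, Measurable (f i)) : Measurable fun x => s.sup fun i => f i x := by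
  induction s using Finset.cons_induction with
  | empty => exact measurable_const
  | cons i s _ ih =>
    simp only [sup_cons]
    exact (hf i (mem_cons_self i s)).sup (ih fun k hk => hf k (mem_cons_of_mem hk))

section

variable {m : ℕ}

theorem measurable_countLE (t : ℝ) : Measurable fun p : Fin m → ℝ => countLE p t := by
  simp only [countLE, card_filter]
  exact Finset.measurable_sum _ fun j _ =>
    Measurable.ite (measurableSet_le (measurable_pi_apply j) measurable_const)
      measurable_const measurable_const

theorem measurable_bhIndex (α : ℝ) : Measurable fun p : Fin m → ℝ => bhIndex p α := by
  have h : (fun p : Fin m → ℝ => bhIndex p α) =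
      fun p => (Icc 1 m).sup fun i => if i ≤ countLE p (i * α / m) then i else 0 := by
    funext p
    rw [bhIndex_eq_sup_countLE, sup_ite]
    simp only [not_le, Finset.sup_le_iff, mem_filter, mem_Icc, zero_le, implies_true,
      sup_of_le_left]
    rfl
  rw [h]
  exact Finset.measurable_sup_apply _ fun i _ =>
    Measurable.ite (measurable_countLE _ measurableSet_Ici) measurable_const measurable_const

end

theorem ProbabilityTheory.iIndepFun.indepFun_update {Ω ι β : Type*} [MeasurableSpace Ω]
    [MeasurableSpace β] [Fintype ι] [DecidableEq ι] {P : Measure Ω} {f : ι → Ω → β}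
    (hindep : iIndepFun f P) (hf : ∀ i, Measurable (f i)) (j : ι) (c : β) :
    IndepFun (f j) (fun ω => update (fun i => f i ω) j c) P := by
  have hST : Disjoint ({j} : Finset ι) {j}ᶜ := disjoint_compl_right
  refine (hindep.indepFun_finset _ _ hST hf).comp
    (φ := fun y => y ⟨j, mem_singleton_self j⟩)
    (ψ := fun y i => if h : i = j then c else y ⟨i, by simpa using h⟩)
    (measurable_pi_apply _) (measurable_pi_lambda _ fun i => ?_) |>.congr ?_ ?_
  · split_ifs <;> fun_prop
  · rfl
  · refine Filter.Eventually.of_forall fun ω => funext fun i => ?_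
    by_cases h : i = j
    · subst h; simp
    · simp [h]

theorem measureReal_le_of_map_eq_uniform {Ω : Type*} [MeasurableSpace Ω] {P : Measure Ω}
    {X : Ω → ℝ} (hX : Measurable X) (hunif : P.map X = volume.restrict (Set.Icc (0 : ℝ) 1))
    {t : ℝ} (ht : t ∈ Set.Icc (0 : ℝ) 1) : P.real {ω | X ω ≤ t} = t := by
  have hIic : Set.Iic t ∩ Set.Icc 0 1 = Set.Icc 0 t := by
    ext x
    simp only [Set.mem_inter_iff, Set.mem_Iic, Set.mem_Icc]
    constructor
    · rintro ⟨hxt, hx0, -⟩; exact ⟨hx0, hxt⟩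
    · rintro ⟨hx0, hxt⟩; exact ⟨hxt, hx0, hxt.trans ht.2⟩
  change (P (X ⁻¹' Set.Iic t)).toReal = t
  rw [← Measure.map_apply hX measurableSet_Iic, hunif,
    Measure.restrict_apply measurableSet_Iic, hIic, Real.volume_Icc, sub_zero,
    ENNReal.toReal_ofReal ht.1]

theorem integral_ite_le_mul_inv {Ω : Type*} [MeasurableSpace Ω] {P : Measure Ω}
    [IsProbabilityMeasure P] {X : Ω → ℝ} {K : Ω → ℕ} (hX : Measurable X) (hK : Measurable K)
    (hXK : IndepFun X K P) (hcdf : ∀ t ∈ Set.Icc (0 : ℝ) 1, P.real {ω | X ω ≤ t} = t)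
    {n : ℕ} {c : ℝ} (hc : 0 ≤ c) (hnc : n * c ≤ 1) (hKn : ∀ ω, K ω ∈ Icc 1 n) :
    Integrable (fun ω => if X ω ≤ K ω * c then (K ω : ℝ)⁻¹ else 0) P ∧
      ∫ ω, (if X ω ≤ K ω * c then (K ω : ℝ)⁻¹ else 0) ∂P = c := by
  set A : ℕ → Set Ω := fun k => X ⁻¹' Set.Iic (k * c) ∩ K ⁻¹' {k}
  have hA : ∀ k, MeasurableSet (A k) := fun k =>
    (hX measurableSet_Iic).inter (hK (measurableSet_singleton k))
  have hsplit : (fun ω => if X ω ≤ K ω * c then (K ω : ℝ)⁻¹ else 0) =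
      fun ω => ∑ k ∈ Icc 1 n, (A k).indicator (fun _ => (k : ℝ)⁻¹) ω := by
    funext ω
    rw [sum_eq_single_of_mem (K ω) (hKn ω) fun k _ hk => Set.indicator_of_notMem
      (fun hω => hk hω.2.symm) _]
    by_cases h : X ω ≤ K ω * c <;> simp [A, h]
  have hint : ∀ k ∈ Icc 1 n, Integrable ((A k).indicator fun _ => (k : ℝ)⁻¹) P :=
    fun k _ => (integrable_const _).indicator (hA k)
  have hterm : ∀ k ∈ Icc 1 n,
      ∫ ω, (A k).indicator (fun _ => (k : ℝ)⁻¹) ω ∂P = c * P.real (K ⁻¹' {k}) := by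
    intro k hk
    obtain ⟨hk1, hkn⟩ := mem_Icc.1 hk
    have hkc : (k : ℝ) * c ∈ Set.Icc (0 : ℝ) 1 :=
      ⟨by positivity, le_trans (by gcongr) hnc⟩
    rw [integral_indicator_const _ (hA k), smul_eq_mul, measureReal_def,
      hXK.measure_inter_preimage_eq_mul _ _ measurableSet_Iic (measurableSet_singleton k),
      ENNReal.toReal_mul, ← measureReal_def, ← measureReal_def]
    rw [show X ⁻¹' Set.Iic (k * c) = {ω | X ω ≤ k * c} from rfl, hcdf _ hkc]
    field_simp
  have hK_total : ∑ k ∈ Icc 1 n, P.real (K ⁻¹' {k}) = 1 := by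
    rw [sum_measureReal_preimage_singleton _ fun k _ => hK (measurableSet_singleton k)]
    rw [show K ⁻¹' (Icc 1 n : Finset ℕ) = Set.univ from Set.eq_univ_of_forall fun ω => by
      simpa using hKn ω]
    simp
  rw [hsplit]
  refine ⟨integrable_finsetSum _ hint, ?_⟩
  rw [integral_finsetSum _ hint, sum_congr rfl hterm, ← mul_sum, hK_total, mul_one]

theorem integral_ite_le_bhIndex_update {Ω : Type*} [MeasurableSpace Ω] {P : Measure Ω}
    [IsProbabilityMeasure P] {m : ℕ} {p : Fin m → Ω → ℝ} (hmeas : ∀ j, Measurable (p j))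
    (hindep : iIndepFun p P) {α : ℝ} (hα : α ∈ Set.Icc (0 : ℝ) 1) {j : Fin m}
    (hnull : P.map (p j) = volume.restrict (Set.Icc (0 : ℝ) 1)) :
    Integrable (fun ω => if p j ω ≤ bhIndex (update (fun l => p l ω) j 0) α * α / m
      then (bhIndex (update (fun l => p l ω) j 0) α : ℝ)⁻¹ else 0) P ∧
    ∫ ω, (if p j ω ≤ bhIndex (update (fun l => p l ω) j 0) α * α / m
      then (bhIndex (update (fun l => p l ω) j 0) α : ℝ)⁻¹ else 0) ∂P = α / m := by
  have hm : (m : ℝ) ≠ 0 := Nat.cast_ne_zero.2 (Fin.pos j).ne'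
  have hK : Measurable fun ω => bhIndex (update (fun l => p l ω) j 0) α :=
    (measurable_bhIndex α).comp (measurable_update_left.comp (measurable_pi_lambda _ hmeas))
  have hXK := (hindep.indepFun_update hmeas j 0).comp measurable_id (measurable_bhIndex α)
  simp_rw [mul_div_assoc]
  exact integral_ite_le_mul_inv (hmeas j) hK hXK
    (fun t ht => measureReal_le_of_map_eq_uniform (hmeas j) hnull ht)
    (div_nonneg hα.1 m.cast_nonneg) (by rw [mul_div_cancel₀ _ hm]; exact hα.2)
    fun ω => mem_Icc.2 ⟨one_le_bhIndex_update _ j hα.1, bhIndex_le _ α⟩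

open MeasureTheory ProbabilityTheory Classical in
theorem bh_FDR_eq_general {Ω : Type*} [MeasurableSpace Ω]
    (P : Measure Ω) [IsProbabilityMeasure P] {m : ℕ}
    (p : Fin m → Ω → ℝ) (hmeas : ∀ j, Measurable (p j))
    (hindep : iIndepFun p P)
    (H₀ : Finset (Fin m)) (m₀ : ℕ) (hm₀ : H₀.card = m₀)
    (hnull : ∀ j ∈ H₀, Measure.map (p j) P = volume.restrict (Set.Icc (0:ℝ) 1))
    (α : ℝ) (hα : α ∈ Set.Icc (0 : ℝ) 1) :
    (∫ ω, ((bhReject (fun j => p j ω) α ∩ H₀).card : ℝ) /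
        max ((bhReject (fun j => p j ω) α).card : ℝ) 1 ∂P) = α * m₀ / m ∧
      (∫ ω, ((bhReject (fun j => p j ω) α ∩ H₀).card : ℝ) /
        max ((bhReject (fun j => p j ω) α).card : ℝ) 1 ∂P) ≤ α := by
  have hcontrib := fun j (hj : j ∈ H₀) =>
    integral_ite_le_bhIndex_update hmeas hindep hα (hnull j hj)
  have hFDR : (∫ ω, ((bhReject (fun j => p j ω) α ∩ H₀).card : ℝ) /
      max ((bhReject (fun j => p j ω) α).card : ℝ) 1 ∂P) = α * m₀ / m := by
    simp_rw [card_bhReject_inter_div_eq_sum _ hα.1]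
    rw [integral_finsetSum _ fun j hj => (hcontrib j hj).1,
      sum_congr rfl fun j hj => (hcontrib j hj).2, sum_const, hm₀, nsmul_eq_mul]
    ring
  have hm₀m : (m₀ : ℝ) ≤ m := by
    rw [← hm₀]
    exact_mod_cast card_le_univ H₀ |>.trans_eq (Fintype.card_fin m)
  exact ⟨hFDR, hFDR ▸ div_le_of_le_mul₀ m.cast_nonneg hα.1 (by gcongr; exact hα.1)⟩

open MeasureTheory ProbabilityTheory Classical in
/-- For m independent p-values with the `m₀` true nulls uniform on [0,1], the
Benjamini–Hochberg procedure at level α has FDR exactly `α·m₀/m`; in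
particular the FDR is at most α. -/
theorem bh_FDR_eq {Ω : Type*} [MeasurableSpace Ω]
    (P : Measure Ω) [IsProbabilityMeasure P] {m : ℕ}
    (p : Fin m → Ω → ℝ) (hmeas : ∀ j, Measurable (p j))
    (hindep : iIndepFun p P)
    (H₀ : Finset (Fin m)) (m₀ : ℕ) (hm₀ : H₀.card = m₀)
    (hnull : ∀ j ∈ H₀, Measure.map (p j) P = volume.restrict (Set.Icc (0:ℝ) 1))
    (hrange : ∀ j ω, p j ω ∈ Set.Icc (0 : ℝ) 1)
    (α : ℝ) (hα : α ∈ Set.Icc (0 : ℝ) 1) :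
    (∫ ω, ((bhReject (fun j => p j ω) α ∩ H₀).card : ℝ) /
        max ((bhReject (fun j => p j ω) α).card : ℝ) 1 ∂P) = α * m₀ / m ∧
      (∫ ω, ((bhReject (fun j => p j ω) α ∩ H₀).card : ℝ) /
        max ((bhReject (fun j => p j ω) α).card : ℝ) 1 ∂P) ≤ α :=
  bh_FDR_eq_general P p hmeas hindep H₀ m₀ hm₀ hnull α hα
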